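/- Let x^n = (x^1,…,x^n) be drawn from the product measure ρ^⊗n, where ρ has density w^{-1} with respect to μ. Fix δ ∈ [0,1) and η ∈ [0,1] such that P(Z_{x^n} > δ) ≤ η. Define the conditional estimator Q^{x^n,C}_{V_m} u = Q^{x^n}_{V_m} u if Z_{x^n} ≤ δ and 0 otherwise. Then E(‖u − Q^{x^n,C}_{V_m} u‖²) ≤ (1 + (1−δ)^{-1}) ‖u − P_{V_m}u‖² + η ‖u‖². -/

import Mathlib

/-!
On the event `Z_{x^n} ≤ δ` the empirical Gram matrix is `δ`-close to the identity, so
`‖v‖²_{x^n} ≥ (1 - δ) ‖v‖²` on `V_m`. Writing `P = P_{V_m} u` and `Q = Q^{x^n}_{V_m} u`, the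
Pythagorean identities `‖u - Q‖² = ‖u - P‖² + ‖P - Q‖²` in `L²_μ` and
`‖u - P‖²_{x^n} = ‖u - Q‖²_{x^n} + ‖Q - P‖²_{x^n}` for the discrete semi-norm then give
`‖u - Q‖² ≤ ‖u - P‖² + (1 - δ)⁻¹ ‖u - P‖²_{x^n}`; on the complementary event, of probability at
most `η`, the error is `‖u‖²`. Taking expectations, the weight `w` exactly compensates the
sampling density `w⁻¹`, so `E ‖u - P‖²_{x^n} = ‖u - P‖²`.
-/

open MeasureTheory ProbabilityTheory

noncomputable section

/-- Spectral norm (matrix operator norm w.r.t. the Euclidean norm) of a real square matrix. -/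
def specNorm {m : ℕ} (A : Matrix (Fin m) (Fin m) ℝ) : ℝ :=
  ‖Matrix.toEuclideanCLM (𝕜 := ℝ) A‖

variable {d : ℕ}

/-- Squared `L²_μ` norm: `‖v‖² = ∫ v² dμ`. -/
def l2normSq {X : Set (Fin d → ℝ)} (μ : Measure X) (v : X → ℝ) : ℝ :=
  ∫ t, v t ^ 2 ∂μ

/-- Squared discrete semi-norm `‖v‖²_{x^n} = (1/n) ∑ᵢ w(xⁱ) v(xⁱ)²`. -/
def discNormSq {X : Set (Fin d → ℝ)} (w : X → ℝ) {n : ℕ} (x : Fin n → X) (v : X → ℝ) : ℝ :=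
  (1 / (n : ℝ)) * ∑ i, w (x i) * v (x i) ^ 2

/-- Empirical Gram matrix `G_{x^n} = (1/n) ∑ᵢ w(xⁱ) φ(xⁱ) ⊗ φ(xⁱ)`. -/
def gram {X : Set (Fin d → ℝ)} {m : ℕ} (w : X → ℝ) (φ : Fin m → X → ℝ) {n : ℕ}
    (x : Fin n → X) : Matrix (Fin m) (Fin m) ℝ :=
  Matrix.of fun j k => (1 / (n : ℝ)) * ∑ i, w (x i) * (φ j (x i) * φ k (x i))

/-- Stability statistic `Z_{x^n} = ‖G_{x^n} − I‖₂`. -/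
def Zstat {X : Set (Fin d → ℝ)} {m : ℕ} (w : X → ℝ) (φ : Fin m → X → ℝ) {n : ℕ}
    (x : Fin n → X) : ℝ :=
  specNorm (gram w φ x - 1)

/-- Orthogonal projection onto `V_m`: `P_{V_m} u = ∑ⱼ (∫ u φⱼ dμ) φⱼ`. -/
def proj {X : Set (Fin d → ℝ)} (μ : Measure X) {m : ℕ} (φ : Fin m → X → ℝ) (u : X → ℝ) :
    X → ℝ :=
  fun t => ∑ j, (∫ s, u s * φ j s ∂μ) * φ j t

/-- Weighted supremum norm `‖v‖_{∞,w} = sup_x w(x)^{1/2} |v(x)|`. -/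
def wSupNorm {X : Set (Fin d → ℝ)} (w : X → ℝ) (v : X → ℝ) : ℝ :=
  ⨆ t : X, Real.sqrt (w t) * |v t|

/-- The approximation space `V_m`, the span of `φ_1, …, φ_m`. -/
def Vspan {X : Set (Fin d → ℝ)} {m : ℕ} (φ : Fin m → X → ℝ) : Submodule ℝ (X → ℝ) :=
  Submodule.span ℝ (Set.range φ)

open scoped Matrix Matrix.Norms.L2Operator

section SpectralNorm

lemma abs_dotProduct_mulVec_le_specNorm {m : ℕ} (A : Matrix (Fin m) (Fin m) ℝ) (c : Fin m → ℝ) :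
    |c ⬝ᵥ A *ᵥ c| ≤ specNorm A * (c ⬝ᵥ c) := by
  set x : EuclideanSpace ℝ (Fin m) := WithLp.toLp 2 c
  have hx : ‖x‖ ^ 2 = c ⬝ᵥ c := by
    simpa [real_inner_self_eq_norm_sq] using Matrix.inner_toEuclideanCLM (1 : Matrix _ _ ℝ) x x
  calc |c ⬝ᵥ A *ᵥ c| = |inner ℝ x (Matrix.toEuclideanCLM (𝕜 := ℝ) A x)| := by
        rw [Matrix.inner_toEuclideanCLM]
    _ ≤ ‖x‖ * ‖Matrix.toEuclideanCLM (𝕜 := ℝ) A x‖ := abs_real_inner_le_norm _ _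
    _ ≤ ‖x‖ * (specNorm A * ‖x‖) := by gcongr; exact (Matrix.toEuclideanCLM (𝕜 := ℝ) A).le_opNorm x
    _ = specNorm A * (c ⬝ᵥ c) := by rw [← hx]; ring

lemma continuous_specNorm {m : ℕ} : Continuous (specNorm : Matrix (Fin m) (Fin m) ℝ → ℝ) :=
  continuous_norm

end SpectralNorm

section L2

variable {X : Set (Fin d → ℝ)} {μ : Measure X} {m : ℕ} {φ : Fin m → X → ℝ} {u : X → ℝ}

lemma l2normSq_nonneg (μ : Measure X) (v : X → ℝ) : 0 ≤ l2normSq μ v :=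
  integral_nonneg fun _ => sq_nonneg _

lemma l2normSq_add {f g : X → ℝ} (hf : MemLp f 2 μ) (hg : MemLp g 2 μ) :
    l2normSq μ (f + g) = l2normSq μ f + 2 * ∫ t, f t * g t ∂μ + l2normSq μ g := by
  have hfg : Integrable (fun t => 2 * (f t * g t)) μ := (hf.integrable_mul hg).const_mul 2
  have hf_fg : Integrable (fun t => f t ^ 2 + 2 * (f t * g t)) μ := hf.integrable_sq.add hfg
  simp only [l2normSq, Pi.add_apply, add_sq, mul_assoc]
  rw [integral_add hf_fg hg.integrable_sq, integral_add hf.integrable_sq hfg, integral_const_mul]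

lemma memLp_sum_smul (hφ2 : ∀ j, MemLp (φ j) 2 μ) (c : Fin m → ℝ) :
    MemLp (∑ j, c j • φ j) 2 μ :=
  memLp_finsetSum' _ fun j _ => (hφ2 j).const_smul (c j)

lemma integral_mul_sum_smul {f : X → ℝ} (hf : MemLp f 2 μ) (hφ2 : ∀ j, MemLp (φ j) 2 μ)
    (c : Fin m → ℝ) :
    ∫ t, f t * (∑ j, c j • φ j) t ∂μ = ∑ j, c j * ∫ t, f t * φ j t ∂μ := by
  simp only [Finset.sum_apply, Pi.smul_apply, smul_eq_mul, Finset.mul_sum, mul_left_comm (f _)]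
  have hfφ (j : Fin m) : Integrable (fun t => f t * φ j t) μ := hf.integrable_mul (hφ2 j)
  rw [integral_finsetSum _ fun j _ => (hfφ j).const_mul (c j)]
  simp only [integral_const_mul]

lemma integral_mul_sum_smul_of_orthonormal (hφ2 : ∀ j, MemLp (φ j) 2 μ)
    (hortho : ∀ i j, (∫ t, φ i t * φ j t ∂μ) = if i = j then (1 : ℝ) else 0)
    (c : Fin m → ℝ) (i : Fin m) :
    ∫ t, φ i t * (∑ j, c j • φ j) t ∂μ = c i := by
  rw [integral_mul_sum_smul (hφ2 i) hφ2]
  simp [hortho]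

lemma l2normSq_sum_smul (hφ2 : ∀ j, MemLp (φ j) 2 μ)
    (hortho : ∀ i j, (∫ t, φ i t * φ j t ∂μ) = if i = j then (1 : ℝ) else 0)
    (c : Fin m → ℝ) :
    l2normSq μ (∑ j, c j • φ j) = c ⬝ᵥ c := by
  calc l2normSq μ (∑ j, c j • φ j)
      = ∫ t, (∑ j, c j • φ j) t * (∑ j, c j • φ j) t ∂μ := by simp only [l2normSq, sq]
    _ = ∑ j, c j * ∫ t, (∑ j, c j • φ j) t * φ j t ∂μ :=
        integral_mul_sum_smul (memLp_sum_smul hφ2 c) hφ2 c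
    _ = c ⬝ᵥ c := by
        simp only [mul_comm _ (φ _ _), integral_mul_sum_smul_of_orthonormal hφ2 hortho]
        rfl

lemma proj_eq_sum_smul : proj μ φ u = ∑ j, (∫ t, u t * φ j t ∂μ) • φ j := by
  ext t
  simp [proj, Finset.sum_apply]

lemma proj_mem_Vspan : proj μ φ u ∈ Vspan φ := by
  rw [proj_eq_sum_smul]
  exact Submodule.sum_mem _ fun j _ => Submodule.smul_mem _ _ (Submodule.subset_span ⟨j, rfl⟩)

lemma memLp_proj (hφ2 : ∀ j, MemLp (φ j) 2 μ) : MemLp (proj μ φ u) 2 μ := by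
  rw [proj_eq_sum_smul]
  exact memLp_sum_smul hφ2 _

lemma integral_sub_proj_mul_eq_zero (hφ2 : ∀ j, MemLp (φ j) 2 μ)
    (hortho : ∀ i j, (∫ t, φ i t * φ j t ∂μ) = if i = j then (1 : ℝ) else 0)
    (hu2 : MemLp u 2 μ) {g : X → ℝ} (hg : g ∈ Vspan φ) :
    ∫ t, (u - proj μ φ u) t * g t ∂μ = 0 := by
  obtain ⟨c, rfl⟩ := (Submodule.mem_span_range_iff_exists_fun ℝ).1 hg
  rw [integral_mul_sum_smul (hu2.sub (memLp_proj hφ2)) hφ2]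
  refine Finset.sum_eq_zero fun j _ => ?_
  have huφ : Integrable (fun t => u t * φ j t) μ := hu2.integrable_mul (hφ2 j)
  have hPφ : Integrable (fun t => proj μ φ u t * φ j t) μ := (memLp_proj hφ2).integrable_mul (hφ2 j)
  have hproj : ∫ t, proj μ φ u t * φ j t ∂μ = ∫ t, u t * φ j t ∂μ := by
    simp_rw [mul_comm (proj μ φ u _)]
    rw [proj_eq_sum_smul, integral_mul_sum_smul_of_orthonormal hφ2 hortho]
  simp only [Pi.sub_apply, sub_mul]
  rw [integral_sub huφ hPφ, hproj, sub_self, mul_zero]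

lemma l2normSq_sub_eq_add_l2normSq_proj_sub (hφ2 : ∀ j, MemLp (φ j) 2 μ)
    (hortho : ∀ i j, (∫ t, φ i t * φ j t ∂μ) = if i = j then (1 : ℝ) else 0)
    (hu2 : MemLp u 2 μ) {g : X → ℝ} (hg : g ∈ Vspan φ) :
    l2normSq μ (u - g) = l2normSq μ (u - proj μ φ u) + l2normSq μ (proj μ φ u - g) := by
  have hgLp : MemLp g 2 μ := by
    obtain ⟨c, rfl⟩ := (Submodule.mem_span_range_iff_exists_fun ℝ).1 hg
    exact memLp_sum_smul hφ2 c
  rw [← sub_add_sub_cancel u (proj μ φ u) g,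
    l2normSq_add (hu2.sub (memLp_proj hφ2)) ((memLp_proj hφ2).sub hgLp),
    integral_sub_proj_mul_eq_zero hφ2 hortho hu2 (Submodule.sub_mem _ proj_mem_Vspan hg)]
  ring

end L2

section Discrete

variable {X : Set (Fin d → ℝ)} {m n : ℕ} {w : X → ℝ} {x : Fin n → X}

def discInner (w : X → ℝ) (x : Fin n → X) (f g : X → ℝ) : ℝ :=
  (1 / (n : ℝ)) * ∑ i, w (x i) * (f (x i) * g (x i))

lemma discNormSq_nonneg (hw : ∀ t, 0 ≤ w t) (x : Fin n → X) (v : X → ℝ) :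
    0 ≤ discNormSq w x v :=
  mul_nonneg (by positivity) (Finset.sum_nonneg fun i _ => mul_nonneg (hw _) (sq_nonneg _))

lemma discNormSq_sub_comm (w : X → ℝ) (x : Fin n → X) (f g : X → ℝ) :
    discNormSq w x (f - g) = discNormSq w x (g - f) := by
  unfold discNormSq
  congr 1
  exact Finset.sum_congr rfl fun i _ => by simp only [Pi.sub_apply]; ring

lemma discNormSq_add_smul (w : X → ℝ) (x : Fin n → X) (f g : X → ℝ) (s : ℝ) :
    discNormSq w x (f + s • g)
      = discNormSq w x f + 2 * s * discInner w x f g + s ^ 2 * discNormSq w x g := by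
  simp only [discNormSq, discInner, Pi.add_apply, Pi.smul_apply, smul_eq_mul, Finset.mul_sum,
    ← Finset.sum_add_distrib]
  exact Finset.sum_congr rfl fun i _ => by ring

lemma discInner_sub_eq_zero_of_isMin {V : Submodule ℝ (X → ℝ)} {u q g : X → ℝ} (hq : q ∈ V)
    (hmin : ∀ g ∈ V, discNormSq w x (u - q) ≤ discNormSq w x (u - g)) (hg : g ∈ V) :
    discInner w x (u - q) g = 0 := by
  have hquad (s : ℝ) :
      0 ≤ discNormSq w x g * (s * s) + 2 * discInner w x (u - q) g * s + 0 := by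
    have h := hmin (q - s • g) (V.sub_mem hq (V.smul_mem s hg))
    rw [sub_sub_eq_add_sub, add_sub_right_comm, discNormSq_add_smul] at h
    nlinarith
  have h := discrim_le_zero hquad
  rw [discrim] at h
  nlinarith [sq_nonneg (discInner w x (u - q) g)]

lemma discNormSq_sub_eq_add_of_isMin {V : Submodule ℝ (X → ℝ)} {u q g : X → ℝ} (hq : q ∈ V)
    (hmin : ∀ g ∈ V, discNormSq w x (u - q) ≤ discNormSq w x (u - g)) (hg : g ∈ V) :
    discNormSq w x (u - g) = discNormSq w x (u - q) + discNormSq w x (q - g) := by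
  have h := discNormSq_add_smul w x (u - q) (q - g) 1
  rw [one_smul, discInner_sub_eq_zero_of_isMin hq hmin (V.sub_mem hq hg)] at h
  rw [← sub_add_sub_cancel u q g, h]
  ring

lemma discNormSq_sum_smul (w : X → ℝ) (φ : Fin m → X → ℝ) (x : Fin n → X) (c : Fin m → ℝ) :
    discNormSq w x (∑ j, c j • φ j) = c ⬝ᵥ gram w φ x *ᵥ c := by
  simp only [discNormSq, Finset.sum_apply, Pi.smul_apply, smul_eq_mul, sq, Finset.sum_mul_sum]
  simp only [gram, dotProduct, Matrix.mulVec, Matrix.of_apply, Finset.mul_sum, Finset.sum_mul]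
  rw [Finset.sum_comm]
  refine Finset.sum_congr rfl fun j _ => ?_
  rw [Finset.sum_comm]
  exact Finset.sum_congr rfl fun k _ => Finset.sum_congr rfl fun i _ => by ring

end Discrete

section Sampling

variable {X : Set (Fin d → ℝ)} {m n : ℕ} {w : X → ℝ} {φ : Fin m → X → ℝ}

lemma measurable_Zstat (hwm : Measurable w) (hφm : ∀ j, Measurable (φ j)) :
    Measurable (fun y : Fin n → X => Zstat w φ y) := by
  have hentries : Measurable fun y : Fin n → X => fun j k => (gram w φ y - 1) j k := by
    refine measurable_pi_lambda _ fun j => measurable_pi_lambda _ fun k => ?_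
    simp only [gram, Matrix.sub_apply, Matrix.of_apply]
    fun_prop
  have hcont : Continuous fun A : Fin m → Fin m → ℝ => specNorm (Matrix.of A) :=
    continuous_specNorm
  exact hcont.measurable.comp hentries

end Sampling

section Expectation

variable {X : Set (Fin d → ℝ)} {μ : Measure X} {n : ℕ} {w : X → ℝ} {v : X → ℝ}

lemma integral_mul_sq_withDensity_inv (hw : ∀ t, 0 < w t) (hwm : Measurable w) (v : X → ℝ) :
    ∫ t, w t * v t ^ 2 ∂(μ.withDensity fun t => ENNReal.ofReal (w t)⁻¹) = l2normSq μ v := by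
  rw [integral_withDensity_eq_integral_toReal_smul (by fun_prop)
    (ae_of_all _ fun _ => ENNReal.ofReal_lt_top)]
  refine integral_congr_ae (ae_of_all _ fun t => ?_)
  simp [ENNReal.toReal_ofReal (inv_nonneg.2 (hw t).le), (hw t).ne']

lemma integrable_mul_sq_withDensity_inv (hw : ∀ t, 0 < w t) (hwm : Measurable w)
    (hv : MemLp v 2 μ) :
    Integrable (fun t => w t * v t ^ 2) (μ.withDensity fun t => ENNReal.ofReal (w t)⁻¹) := by
  rw [integrable_withDensity_iff_integrable_smul' (by fun_prop)
    (ae_of_all _ fun _ => ENNReal.ofReal_lt_top)]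
  refine hv.integrable_sq.congr (ae_of_all _ fun t => ?_)
  simp [ENNReal.toReal_ofReal (inv_nonneg.2 (hw t).le), (hw t).ne']

variable {ρ : Measure X} [IsProbabilityMeasure ρ]

lemma integrable_mul_sq_eval (hρ : ρ = μ.withDensity fun t => ENNReal.ofReal (w t)⁻¹)
    (hw : ∀ t, 0 < w t) (hwm : Measurable w) (hv : MemLp v 2 μ) (i : Fin n) :
    Integrable (fun y : Fin n → X => w (y i) * v (y i) ^ 2) (Measure.pi fun _ => ρ) := by
  subst hρ
  exact (measurePreserving_eval _ i).integrable_comp_of_integrable (g := fun t => w t * v t ^ 2)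
    (integrable_mul_sq_withDensity_inv hw hwm hv)

lemma integrable_discNormSq (hρ : ρ = μ.withDensity fun t => ENNReal.ofReal (w t)⁻¹)
    (hw : ∀ t, 0 < w t) (hwm : Measurable w) (hv : MemLp v 2 μ) :
    Integrable (fun y : Fin n → X => discNormSq w y v) (Measure.pi fun _ => ρ) :=
  (integrable_finsetSum _ fun i _ => integrable_mul_sq_eval hρ hw hwm hv i).const_mul _

-- An inequality only because of `n = 0`, where `discNormSq` is identically `0`.
lemma integral_discNormSq_le (hρ : ρ = μ.withDensity fun t => ENNReal.ofReal (w t)⁻¹)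
    (hw : ∀ t, 0 < w t) (hwm : Measurable w) (hv : MemLp v 2 μ) :
    ∫ y : Fin n → X, discNormSq w y v ∂(Measure.pi fun _ => ρ) ≤ l2normSq μ v := by
  have hmarginal (i : Fin n) :
      ∫ y : Fin n → X, w (y i) * v (y i) ^ 2 ∂(Measure.pi fun _ => ρ) = l2normSq μ v := by
    rw [integral_comp_eval (μ := fun _ => ρ) (i := i) (f := fun t => w t * v t ^ 2)
      (hρ ▸ integrable_mul_sq_withDensity_inv hw hwm hv).aestronglyMeasurable, hρ,
      integral_mul_sq_withDensity_inv hw hwm]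
  calc ∫ y : Fin n → X, discNormSq w y v ∂(Measure.pi fun _ => ρ)
      = (1 / (n : ℝ)) * ∑ _i : Fin n, l2normSq μ v := by
        simp only [discNormSq]
        rw [integral_const_mul,
          integral_finsetSum _ fun i _ => integrable_mul_sq_eval hρ hw hwm hv i]
        simp only [hmarginal]
    _ = (n / n : ℝ) * l2normSq μ v := by
        rw [Finset.sum_const, Finset.card_univ, Fintype.card_fin, nsmul_eq_mul]
        ring
    _ ≤ l2normSq μ v := mul_le_of_le_one_left (l2normSq_nonneg μ v) (div_self_le_one _)

end Expectation

section Estimator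

variable {X : Set (Fin d → ℝ)} {μ : Measure X} {m n : ℕ} {w : X → ℝ} {φ : Fin m → X → ℝ}
  {u : X → ℝ}

lemma one_sub_Zstat_mul_l2normSq_le (hφ2 : ∀ j, MemLp (φ j) 2 μ)
    (hortho : ∀ i j, (∫ t, φ i t * φ j t ∂μ) = if i = j then (1 : ℝ) else 0)
    (x : Fin n → X) {v : X → ℝ} (hv : v ∈ Vspan φ) :
    (1 - Zstat w φ x) * l2normSq μ v ≤ discNormSq w x v := by
  obtain ⟨c, rfl⟩ := (Submodule.mem_span_range_iff_exists_fun ℝ).1 hv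
  have h := abs_dotProduct_mulVec_le_specNorm (gram w φ x - 1) c
  rw [Matrix.sub_mulVec, Matrix.one_mulVec, dotProduct_sub] at h
  rw [l2normSq_sum_smul hφ2 hortho, discNormSq_sum_smul, Zstat]
  linarith [neg_abs_le (c ⬝ᵥ gram w φ x *ᵥ c - c ⬝ᵥ c)]

lemma l2normSq_sub_le_of_Zstat_le (hw : ∀ t, 0 ≤ w t) (hφ2 : ∀ j, MemLp (φ j) 2 μ)
    (hortho : ∀ i j, (∫ t, φ i t * φ j t ∂μ) = if i = j then (1 : ℝ) else 0)
    (hu2 : MemLp u 2 μ) {δ : ℝ} (hδ1 : δ < 1) {x : Fin n → X} (hZ : Zstat w φ x ≤ δ)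
    {q : X → ℝ} (hq : q ∈ Vspan φ)
    (hmin : ∀ g ∈ Vspan φ, discNormSq w x (u - q) ≤ discNormSq w x (u - g)) :
    l2normSq μ (u - q)
      ≤ l2normSq μ (u - proj μ φ u) + (1 - δ)⁻¹ * discNormSq w x (u - proj μ φ u) := by
  set P := proj μ φ u
  have hpyth : l2normSq μ (u - q) = l2normSq μ (u - P) + l2normSq μ (P - q) :=
    l2normSq_sub_eq_add_l2normSq_proj_sub hφ2 hortho hu2 hq
  have hdisc : discNormSq w x (P - q) ≤ discNormSq w x (u - P) := by
    rw [discNormSq_sub_comm, discNormSq_sub_eq_add_of_isMin hq hmin proj_mem_Vspan]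
    linarith [discNormSq_nonneg hw x (u - q)]
  have hstable : l2normSq μ (P - q) ≤ (1 - δ)⁻¹ * discNormSq w x (u - P) := by
    rw [le_inv_mul_iff₀ (sub_pos.2 hδ1)]
    calc (1 - δ) * l2normSq μ (P - q) ≤ (1 - Zstat w φ x) * l2normSq μ (P - q) := by
          gcongr
          exact l2normSq_nonneg μ _
      _ ≤ discNormSq w x (P - q) :=
          one_sub_Zstat_mul_l2normSq_le hφ2 hortho x (Submodule.sub_mem _ proj_mem_Vspan hq)
      _ ≤ discNormSq w x (u - P) := hdisc
  linarith

lemma l2normSq_sub_ite_le (hw : ∀ t, 0 ≤ w t) (hφ2 : ∀ j, MemLp (φ j) 2 μ)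
    (hortho : ∀ i j, (∫ t, φ i t * φ j t ∂μ) = if i = j then (1 : ℝ) else 0)
    (hu2 : MemLp u 2 μ) {δ : ℝ} (hδ1 : δ < 1) (x : Fin n → X) {q : X → ℝ} (hq : q ∈ Vspan φ)
    (hmin : ∀ g ∈ Vspan φ, discNormSq w x (u - q) ≤ discNormSq w x (u - g)) :
    l2normSq μ (u - if Zstat w φ x ≤ δ then q else 0)
      ≤ l2normSq μ (u - proj μ φ u) + (1 - δ)⁻¹ * discNormSq w x (u - proj μ φ u)
        + {y | δ < Zstat w φ y}.indicator (fun _ => l2normSq μ u) x := by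
  by_cases hx : Zstat w φ x ≤ δ
  · rw [if_pos hx, Set.indicator_of_notMem (s := {y | δ < Zstat w φ y}) (not_lt.2 hx), add_zero]
    exact l2normSq_sub_le_of_Zstat_le hw hφ2 hortho hu2 hδ1 hx hq hmin
  · rw [if_neg hx, sub_zero, Set.indicator_of_mem (s := {y | δ < Zstat w φ y}) (lt_of_not_ge hx)]
    have := mul_nonneg (inv_nonneg.2 (sub_pos.2 hδ1).le) (discNormSq_nonneg hw x (u - proj μ φ u))
    linarith [l2normSq_nonneg μ (u - proj μ φ u)]

end Estimator

theorem conditional_estimator_expected_error_general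
    {m n : ℕ} {X : Set (Fin d → ℝ)} (μ : Measure X)
    (w : X → ℝ) (hw : ∀ t, 0 < w t) (hwm : Measurable w)
    (ρ : Measure X) [IsProbabilityMeasure ρ]
    (hρ : ρ = μ.withDensity fun t => ENNReal.ofReal (w t)⁻¹)
    (φ : Fin m → X → ℝ) (hφm : ∀ j, Measurable (φ j)) (hφ2 : ∀ j, MemLp (φ j) 2 μ)
    (hortho : ∀ i j, (∫ t, φ i t * φ j t ∂μ) = if i = j then (1 : ℝ) else 0)
    (u : X → ℝ) (hu2 : MemLp u 2 μ)
    (δ η : ℝ) (hδ1 : δ < 1) (hη0 : 0 ≤ η)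
    (hPZ : (Measure.pi fun _ : Fin n => ρ) {y | δ < Zstat w φ y} ≤ ENNReal.ofReal η)
    (Q : (Fin n → X) → X → ℝ)
    (hQ : ∀ y : Fin n → X, Q y ∈ Vspan φ ∧
      ∀ g ∈ Vspan φ, discNormSq w y (u - Q y) ≤ discNormSq w y (u - g)) :
    (∫ y : Fin n → X, l2normSq μ (u - if Zstat w φ y ≤ δ then Q y else 0)
        ∂(Measure.pi fun _ => ρ)) ≤
      (1 + (1 - δ)⁻¹) * l2normSq μ (u - proj μ φ u) + η * l2normSq μ u := by
  set P := proj μ φ u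
  set T := {y : Fin n → X | δ < Zstat w φ y}
  have hT : MeasurableSet T := measurableSet_lt measurable_const (measurable_Zstat hwm hφm)
  have hres : MemLp (u - P) 2 μ := hu2.sub (memLp_proj hφ2)
  have hD : Integrable (fun y : Fin n → X => (1 - δ)⁻¹ * discNormSq w y (u - P))
      (Measure.pi fun _ => ρ) := (integrable_discNormSq hρ hw hwm hres).const_mul _
  have hcD : Integrable (fun y : Fin n → X => l2normSq μ (u - P)
      + (1 - δ)⁻¹ * discNormSq w y (u - P)) (Measure.pi fun _ => ρ) := (integrable_const _).add hD
  have hI : Integrable (T.indicator fun _ => l2normSq μ u) (Measure.pi fun _ : Fin n => ρ) :=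
    (integrable_const _).indicator hT
  calc ∫ y, l2normSq μ (u - if Zstat w φ y ≤ δ then Q y else 0) ∂(Measure.pi fun _ => ρ)
      ≤ ∫ y, (l2normSq μ (u - P) + (1 - δ)⁻¹ * discNormSq w y (u - P)
          + T.indicator (fun _ => l2normSq μ u) y) ∂(Measure.pi fun _ => ρ) :=
        integral_mono_of_nonneg (ae_of_all _ fun _ => l2normSq_nonneg μ _) (hcD.add hI)
          (ae_of_all _ fun y => l2normSq_sub_ite_le (fun t => (hw t).le) hφ2 hortho hu2 hδ1 y
            (hQ y).1 (hQ y).2)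
    _ = l2normSq μ (u - P)
          + (1 - δ)⁻¹ * ∫ y : Fin n → X, discNormSq w y (u - P) ∂(Measure.pi fun _ => ρ)
          + (Measure.pi fun _ => ρ).real T * l2normSq μ u := by
        rw [integral_add hcD hI, integral_add (integrable_const _) hD,
          integral_const, integral_const_mul, integral_indicator_const _ hT]
        simp
    _ ≤ l2normSq μ (u - P) + (1 - δ)⁻¹ * l2normSq μ (u - P) + η * l2normSq μ u := by
        gcongr
        · exact integral_discNormSq_le hρ hw hwm hres
        · exact l2normSq_nonneg μ u
        · exact ENNReal.toReal_le_of_le_ofReal hη0 hPZ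
    _ = (1 + (1 - δ)⁻¹) * l2normSq μ (u - P) + η * l2normSq μ u := by ring

/-- error in expectation for the conditional weighted least-squares estimator. -/
theorem conditional_estimator_expected_error
    {m n : ℕ} {X : Set (Fin d → ℝ)} (μ : Measure X) [IsProbabilityMeasure μ]
    (w : X → ℝ) (hw : ∀ t, 0 < w t) (hwm : Measurable w)
    (ρ : Measure X) [IsProbabilityMeasure ρ]
    (hρ : ρ = μ.withDensity fun t => ENNReal.ofReal (w t)⁻¹)
    (φ : Fin m → X → ℝ) (hφm : ∀ j, Measurable (φ j)) (hφ2 : ∀ j, MemLp (φ j) 2 μ)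
    (hortho : ∀ i j, (∫ t, φ i t * φ j t ∂μ) = if i = j then (1 : ℝ) else 0)
    (u : X → ℝ) (hum : Measurable u) (hu2 : MemLp u 2 μ)
    (δ η : ℝ) (hδ0 : 0 ≤ δ) (hδ1 : δ < 1) (hη0 : 0 ≤ η) (hη1 : η ≤ 1)
    (hPZ : (Measure.pi fun _ : Fin n => ρ) {y | δ < Zstat w φ y} ≤ ENNReal.ofReal η)
    (Q : (Fin n → X) → X → ℝ)
    (hQ : ∀ y : Fin n → X, Q y ∈ Vspan φ ∧
      ∀ g ∈ Vspan φ, discNormSq w y (u - Q y) ≤ discNormSq w y (u - g)) :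
    (∫ y : Fin n → X, l2normSq μ (u - if Zstat w φ y ≤ δ then Q y else 0)
        ∂(Measure.pi fun _ => ρ)) ≤
      (1 + (1 - δ)⁻¹) * l2normSq μ (u - proj μ φ u) + η * l2normSq μ u :=
  conditional_estimator_expected_error_general μ w hw hwm ρ hρ φ hφm hφ2 hortho u hu2 δ η hδ1 hη0
    hPZ Q hQ
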